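/- arXiv:2103.17024 — 3 statements merged into one kernel-verified Lean document; each statement's English description precedes it below -/
import Mathlib

section
/- Intuitionistic principle of isomorphic correction: let M, N be Kripke Θ-models and (g,h) an IL-elementary embedding of M into N. Then there exists a Θ-model M' and functions g' ⊇ g, h' ⊇ h such that M is an IL-elementary submodel of M' and (g',h') is an isomorphism from M' onto N. -/
set_option linter.unusedVariables false

universe u

/-- A first-order signature: predicate symbols with arities, and constant symbols. -/
structure Sig : Type (u + 1) where
  Pred : Type u
  arity : Pred → ℕ
  Const : Type u

/-- A first-order Kripke `S`-model with ambient type `W` of worlds and `D` of objects. -/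
structure KModel (S : Sig.{u}) (W : Type*) (D : Type*) where
  worlds : Set W
  rel : W → W → Prop
  rel_mem : ∀ {a b}, rel a b → a ∈ worlds ∧ b ∈ worlds
  rel_refl : ∀ {a}, a ∈ worlds → rel a a
  rel_trans : ∀ {a b c}, rel a b → rel b c → rel a c
  rel_antisymm : ∀ {a b}, rel a b → rel b a → a = b
  dom : W → Set D
  dom_disjoint : ∀ {a b}, a ∈ worlds → b ∈ worlds → a ≠ b → Disjoint (dom a) (dom b)
  interpP : (w : W) → (P : S.Pred) → Set (Fin (S.arity P) → D)
  interpC : W → S.Const → D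
  interpC_mem : ∀ {a}, a ∈ worlds → ∀ c, interpC a c ∈ dom a
  H : W → W → D → D
  H_mem : ∀ {a b}, rel a b → ∀ {x}, x ∈ dom a → H a b x ∈ dom b
  H_id : ∀ {a}, a ∈ worlds → ∀ {x}, x ∈ dom a → H a a x = x
  H_comp : ∀ {a b c}, rel a b → rel b c → ∀ {x}, x ∈ dom a → H a c x = H b c (H a b x)
  H_pred : ∀ {a b}, rel a b → ∀ {P : S.Pred} {t : Fin (S.arity P) → D}, t ∈ interpP a P →
    (∀ i, t i ∈ dom a) → (fun i => H a b (t i)) ∈ interpP b P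
  H_const : ∀ {a b}, rel a b → ∀ c, H a b (interpC a c) = interpC b c

variable {S T : Sig} {W D : Type*}

/-- The total domain `⋃_{w ∈ W} A_w` of a Kripke model. -/
def totalDom (M : KModel S W D) : Set D := ⋃ w ∈ M.worlds, M.dom w

/-- `M` is a submodel of `N`. -/
def Submodel (M N : KModel S W D) : Prop :=
  M.worlds ⊆ N.worlds ∧
  (∀ a b, M.rel a b ↔ N.rel a b ∧ a ∈ M.worlds ∧ b ∈ M.worlds) ∧
  (∀ w ∈ M.worlds, M.dom w ⊆ N.dom w) ∧
  (∀ w ∈ M.worlds, ∀ (P : S.Pred) (t : Fin (S.arity P) → D),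
      (∀ i, t i ∈ M.dom w) → (t ∈ M.interpP w P ↔ t ∈ N.interpP w P)) ∧
  (∀ w ∈ M.worlds, ∀ c, M.interpC w c = N.interpC w c) ∧
  (∀ a b, M.rel a b → ∀ x ∈ M.dom a, M.H a b x = N.H a b x)

/-- Extensional equality of Kripke models (agreement on all meaningful components). -/
def MEq (M N : KModel S W D) : Prop :=
  M.worlds = N.worlds ∧
  (∀ a b, M.rel a b ↔ N.rel a b) ∧
  (∀ w ∈ M.worlds, M.dom w = N.dom w) ∧
  (∀ w ∈ M.worlds, ∀ (P : S.Pred) (t : Fin (S.arity P) → D),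
      (∀ i, t i ∈ M.dom w) → (t ∈ M.interpP w P ↔ t ∈ N.interpP w P)) ∧
  (∀ w ∈ M.worlds, ∀ c, M.interpC w c = N.interpC w c) ∧
  (∀ a b, M.rel a b → ∀ x ∈ M.dom a, M.H a b x = N.H a b x)

/-- Terms of the language: variables (de Bruijn, among `n` free variables) and constants. -/
inductive Term (S : Sig.{u}) (n : ℕ) : Type u where
  | var : Fin n → Term S n
  | const : S.Const → Term S n

/-- Intuitionistic first-order formulas (without equality) with free variables among `Fin n`. -/
inductive Fml (S : Sig.{u}) : ℕ → Type u where
  | atom {n} (P : S.Pred) (ts : Fin (S.arity P) → Term S n) : Fml S n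
  | bot {n} : Fml S n
  | and {n} : Fml S n → Fml S n → Fml S n
  | or {n} : Fml S n → Fml S n → Fml S n
  | imp {n} : Fml S n → Fml S n → Fml S n
  | all {n} : Fml S (n + 1) → Fml S n
  | ex {n} : Fml S (n + 1) → Fml S n

/-- Evaluation of a term at a world under an assignment. -/
def Term.eval (M : KModel S W D) (w : W) {n : ℕ} (ρ : Fin n → D) : Term S n → D
  | .var i => ρ i
  | .const c => M.interpC w c

/-- Kripke satisfaction for intuitionistic first-order logic. -/
def Sat (M : KModel S W D) : ∀ {n : ℕ}, W → Fml S n → (Fin n → D) → Prop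
  | _, w, .atom P ts, ρ => (fun i => Term.eval M w ρ (ts i)) ∈ M.interpP w P
  | _, _, .bot, _ => False
  | _, w, .and φ ψ, ρ => Sat M w φ ρ ∧ Sat M w ψ ρ
  | _, w, .or φ ψ, ρ => Sat M w φ ρ ∨ Sat M w ψ ρ
  | _, w, .imp φ ψ, ρ => ∀ v, M.rel w v →
      (Sat M v φ (fun i => M.H w v (ρ i)) → Sat M v ψ (fun i => M.H w v (ρ i)))
  | _, w, .all φ, ρ => ∀ v, M.rel w v → ∀ a ∈ M.dom v,
      Sat M v φ (Fin.snoc (fun i => M.H w v (ρ i)) a)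
  | _, w, .ex φ, ρ => ∃ a ∈ M.dom w, Sat M w φ (Fin.snoc ρ a)

/-- The positive complete type of a tuple at a world. -/
def TpPos (M : KModel S W D) (w : W) {n : ℕ} (a : Fin n → D) : Set (Fml S n) :=
  {φ | Sat M w φ a}

/-- The complete type: the pair of the sets of formulas true resp. false of the tuple. -/
def Tp (M : KModel S W D) (w : W) {n : ℕ} (a : Fin n → D) :
    Set (Fml S n) × Set (Fml S n) :=
  ({φ | Sat M w φ a}, {φ | ¬ Sat M w φ a})

/-- `M` is an IL-elementary submodel of `N`. -/
def ElemSub (M N : KModel S W D) : Prop :=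
  Submodel M N ∧
  ∀ w ∈ M.worlds, ∀ (n : ℕ) (a : Fin n → D), (∀ i, a i ∈ M.dom w) → Tp M w a = Tp N w a
/-- The submodel of `M` generated by the upward cone of `w`. -/
def genSub (M : KModel S W D) (w : W) : KModel S W D where
  worlds := {v | M.rel w v}
  rel a b := M.rel w a ∧ M.rel a b
  rel_mem := fun {a b} h => ⟨h.1, M.rel_trans h.1 h.2⟩
  rel_refl := fun {a} ha => ⟨ha, M.rel_refl (M.rel_mem ha).2⟩
  rel_trans := fun {a b c} h h' => ⟨h.1, M.rel_trans h.2 h'.2⟩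
  rel_antisymm := fun {a b} h h' => M.rel_antisymm h.2 h'.2
  dom := M.dom
  dom_disjoint := fun {a b} ha hb hne => M.dom_disjoint (M.rel_mem ha).2 (M.rel_mem hb).2 hne
  interpP := M.interpP
  interpC := M.interpC
  interpC_mem := fun {a} ha c => M.interpC_mem (M.rel_mem ha).2 c
  H := M.H
  H_mem := fun {a b} h {x} hx => M.H_mem h.2 hx
  H_id := fun {a} ha {x} hx => M.H_id (M.rel_mem ha).2 hx
  H_comp := fun {a b c} h h' {x} hx => M.H_comp h.2 h'.2 hx
  H_pred := fun {a b} h {P t} ht hdom => M.H_pred h.2 ht hdom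
  H_const := fun {a b} h c => M.H_const h.2 c

/-- Extension of a signature by `n` fresh pairwise distinct constants. -/
def Sig.addConsts (S : Sig.{u}) (n : ℕ) : Sig.{u} where
  Pred := S.Pred
  arity := S.arity
  Const := S.Const ⊕ Fin n

/-- A morphism of signatures (arity preserving). -/
structure SigHom (S T : Sig) where
  predMap : S.Pred → T.Pred
  constMap : S.Const → T.Const
  arity_eq : ∀ P, T.arity (predMap P) = S.arity P

/-- The inclusion of a signature into its extension by fresh constants. -/
def Sig.incConsts (S : Sig) (n : ℕ) : SigHom S (S.addConsts n) :=
  ⟨id, Sum.inl, fun _ => rfl⟩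

/-- Reduct of a model along a signature morphism. -/
def reductHom (r : SigHom S T) (M : KModel T W D) : KModel S W D where
  worlds := M.worlds
  rel := M.rel
  rel_mem := M.rel_mem
  rel_refl := M.rel_refl
  rel_trans := M.rel_trans
  rel_antisymm := M.rel_antisymm
  dom := M.dom
  dom_disjoint := M.dom_disjoint
  interpP w P := {t | (fun i => t (Fin.cast (r.arity_eq P) i)) ∈ M.interpP w (r.predMap P)}
  interpC w c := M.interpC w (r.constMap c)
  interpC_mem := fun {a} ha c => M.interpC_mem ha _
  H := M.H
  H_mem := M.H_mem
  H_id := M.H_id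
  H_comp := M.H_comp
  H_pred := fun {a b} h {P t} ht hdom => M.H_pred h ht (fun i => hdom _)
  H_const := fun {a b} h c => M.H_const h _

/-- The canonical expansion `([M,w], c̄/ā)` of the generated submodel `[M,w]` by fresh
constants denoting `ā` at `w`. -/
def constExt (M : KModel S W D) (w : W) {n : ℕ} (a : Fin n → D)
    (hw : w ∈ M.worlds) (ha : ∀ i, a i ∈ M.dom w) : KModel (S.addConsts n) W D where
  worlds := {v | M.rel w v}
  rel a b := M.rel w a ∧ M.rel a b
  rel_mem := fun {a b} h => ⟨h.1, M.rel_trans h.1 h.2⟩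
  rel_refl := fun {a} ha => ⟨ha, M.rel_refl (M.rel_mem ha).2⟩
  rel_trans := fun {a b c} h h' => ⟨h.1, M.rel_trans h.2 h'.2⟩
  rel_antisymm := fun {a b} h h' => M.rel_antisymm h.2 h'.2
  dom := M.dom
  dom_disjoint := fun {a b} ha hb hne => M.dom_disjoint (M.rel_mem ha).2 (M.rel_mem hb).2 hne
  interpP := M.interpP
  interpC v c := Sum.elim (M.interpC v) (fun i => M.H w v (a i)) c
  interpC_mem := fun {v} hv c => by
    cases c with
    | inl c => exact M.interpC_mem (M.rel_mem hv).2 c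
    | inr i => exact M.H_mem hv (ha i)
  H := M.H
  H_mem := fun {a b} h {x} hx => M.H_mem h.2 hx
  H_id := fun {a} ha {x} hx => M.H_id (M.rel_mem ha).2 hx
  H_comp := fun {a b c} h h' {x} hx => M.H_comp h.2 h'.2 hx
  H_pred := fun {a b} h {P t} ht hdom => M.H_pred h.2 ht hdom
  H_const := fun {u v} h c => by
    cases c with
    | inl c => exact M.H_const h.2 c
    | inr i => exact (M.H_comp h.1 h.2 (ha i)).symm

/-- Translation of terms along a signature morphism. -/
def mapTerm (r : SigHom S T) {n : ℕ} : Term S n → Term T n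
  | .var i => .var i
  | .const c => .const (r.constMap c)

/-- Translation of formulas along a signature morphism. -/
def mapFml (r : SigHom S T) : ∀ {n : ℕ}, Fml S n → Fml T n
  | _, .atom P ts => .atom (r.predMap P) (fun i => mapTerm r (ts (Fin.cast (r.arity_eq P) i)))
  | _, .bot => .bot
  | _, .and φ ψ => .and (mapFml r φ) (mapFml r ψ)
  | _, .or φ ψ => .or (mapFml r φ) (mapFml r ψ)
  | _, .imp φ ψ => .imp (mapFml r φ) (mapFml r ψ)
  | _, .all φ => .all (mapFml r φ)
  | _, .ex φ => .ex (mapFml r φ)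

/-- The canonical identification of `Θ ∪ {c̄_{n+1}}` with `(Θ ∪ {c̄_n}) ∪ {c_{n+1}}`. -/
def flattenHom (S : Sig) (n : ℕ) : SigHom (S.addConsts (n + 1)) ((S.addConsts n).addConsts 1) where
  predMap := id
  constMap := fun c =>
    match c with
    | .inl c => .inl (.inl c)
    | .inr i => if h : (i : ℕ) < n then .inl (.inr ⟨i, h⟩) else .inr 0
  arity_eq := fun _ => rfl

section Hetero

variable {W₁ D₁ W₂ D₂ : Type*}

/-- `(g,h)` is an isomorphism from `M` onto `N`. -/
def IsIso (M : KModel S W₁ D₁) (N : KModel S W₂ D₂) (g : D₁ → D₂) (h : W₁ → W₂) : Prop :=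
  Set.BijOn h M.worlds N.worlds ∧
  Set.BijOn g (totalDom M) (totalDom N) ∧
  (∀ a b, a ∈ M.worlds → b ∈ M.worlds → (M.rel a b ↔ N.rel (h a) (h b))) ∧
  (∀ w ∈ M.worlds, Set.BijOn g (M.dom w) (N.dom (h w))) ∧
  (∀ w ∈ M.worlds, ∀ (P : S.Pred) (t : Fin (S.arity P) → D₁), (∀ i, t i ∈ M.dom w) →
      (t ∈ M.interpP w P ↔ (fun i => g (t i)) ∈ N.interpP (h w) P)) ∧
  (∀ w ∈ M.worlds, ∀ c, g (M.interpC w c) = N.interpC (h w) c) ∧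
  (∀ a b, M.rel a b → ∀ x ∈ M.dom a, g (M.H a b x) = N.H (h a) (h b) (g x))

/-- `(g,h)` is an IL-elementary embedding of `M` into `N`. -/
def IsElemEmbed (M : KModel S W₁ D₁) (N : KModel S W₂ D₂) (g : D₁ → D₂) (h : W₁ → W₂) : Prop :=
  Set.InjOn h M.worlds ∧
  Set.InjOn g (totalDom M) ∧
  (∀ a b, a ∈ M.worlds → b ∈ M.worlds → (M.rel a b ↔ N.rel (h a) (h b))) ∧
  (∀ w ∈ M.worlds, Set.MapsTo g (M.dom w) (N.dom (h w))) ∧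
  (∀ a b, M.rel a b → ∀ x ∈ M.dom a, g (M.H a b x) = N.H (h a) (h b) (g x)) ∧
  (∀ w ∈ M.worlds, ∀ (n : ℕ) (a : Fin n → D₁), (∀ i, a i ∈ M.dom w) →
      Tp M w a = Tp N (h w) (fun i => g (a i)))

/-- The conditions (atom), (s-back), (obj-forth), (obj-back) of an IL-asimulation, for
the direction from `M₁` to `M₂`, with partner family `G` for the converse direction. -/
def AsimDir (M₁ : KModel S W₁ D₁) (M₂ : KModel S W₂ D₂)
    (F : ∀ k : ℕ, W₁ → (Fin k → D₁) → W₂ → (Fin k → D₂) → Prop)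
    (G : ∀ k : ℕ, W₂ → (Fin k → D₂) → W₁ → (Fin k → D₁) → Prop) : Prop :=
  ∀ (k : ℕ) (w : W₁) (α : Fin k → D₁) (v : W₂) (β : Fin k → D₂),
    F k w α v β → (∀ i, α i ∈ M₁.dom w) → (∀ i, β i ∈ M₂.dom v) →
    ((∀ (P : S.Pred) (ts : Fin (S.arity P) → Term S k),
        Sat M₁ w (.atom P ts) α → Sat M₂ v (.atom P ts) β) ∧
     (∀ t, M₂.rel v t → ∃ u, M₁.rel w u ∧
        F k u (fun i => M₁.H w u (α i)) t (fun i => M₂.H v t (β i)) ∧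
        G k t (fun i => M₂.H v t (β i)) u (fun i => M₁.H w u (α i))) ∧
     (∀ α' ∈ M₁.dom w, ∃ β' ∈ M₂.dom v,
        F (k + 1) w (Fin.snoc α α') v (Fin.snoc β β')) ∧
     (∀ t, M₂.rel v t → ∀ β' ∈ M₂.dom t, ∃ u, M₁.rel w u ∧ ∃ α' ∈ M₁.dom u,
        F (k + 1) u (Fin.snoc (fun i => M₁.H w u (α i)) α')
          t (Fin.snoc (fun i => M₂.H v t (β i)) β')))

/-- `(F, G)` is an IL-asimulation (in both directions) between `M₁` and `M₂`. -/
def IsAsim (M₁ : KModel S W₁ D₁) (M₂ : KModel S W₂ D₂)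
    (F : ∀ k : ℕ, W₁ → (Fin k → D₁) → W₂ → (Fin k → D₂) → Prop)
    (G : ∀ k : ℕ, W₂ → (Fin k → D₂) → W₁ → (Fin k → D₁) → Prop) : Prop :=
  AsimDir M₁ M₂ F G ∧ AsimDir M₂ M₁ G F

/-- `(F, G)` is an IL-asimulation from `(M₁, w₁, ā)` to `(M₂, w₂, b̄)`. -/
def AsimFrom (M₁ : KModel S W₁ D₁) (w₁ : W₁) {n : ℕ} (a : Fin n → D₁)
    (M₂ : KModel S W₂ D₂) (w₂ : W₂) (b : Fin n → D₂)
    (F : ∀ k : ℕ, W₁ → (Fin k → D₁) → W₂ → (Fin k → D₂) → Prop)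
    (G : ∀ k : ℕ, W₂ → (Fin k → D₂) → W₁ → (Fin k → D₁) → Prop) : Prop :=
  IsAsim M₁ M₂ F G ∧ F n w₁ a w₂ b

end Hetero

/-- `E` is a congruence on the Kripke model `M`. -/
def IsCong (M : KModel S W D) (E : W → D → D → Prop) : Prop :=
  (∀ w ∈ M.worlds, ∀ a ∈ M.dom w, E w a a) ∧
  (∀ w ∈ M.worlds, ∀ a b, E w a b → E w b a) ∧
  (∀ w ∈ M.worlds, ∀ a b c, E w a b → E w b c → E w a c) ∧
  (∀ w ∈ M.worlds, ∀ a b, E w a b → a ∈ M.dom w ∧ b ∈ M.dom w) ∧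
  (∀ a b, M.rel a b → ∀ x y, E a x y → E b (M.H a b x) (M.H a b y)) ∧
  (∀ w ∈ M.worlds, ∀ (P : S.Pred) (t t' : Fin (S.arity P) → D),
      (∀ i, E w (t i) (t' i)) → (t ∈ M.interpP w P ↔ t' ∈ M.interpP w P))

/-- `Q` is the quotient of `M` by the congruence `E`: same worlds and order, domains of
equivalence classes, induced interpretations and homomorphisms. -/
def IsQuotient (M : KModel S W D) (E : W → D → D → Prop) (Q : KModel S W (Set D)) : Prop :=
  Q.worlds = M.worlds ∧
  (∀ a b, Q.rel a b ↔ M.rel a b) ∧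
  (∀ w ∈ M.worlds, Q.dom w = {s | ∃ a ∈ M.dom w, s = {b | E w a b}}) ∧
  (∀ w ∈ M.worlds, ∀ (P : S.Pred) (T : Fin (S.arity P) → Set D), (∀ i, T i ∈ Q.dom w) →
      (T ∈ Q.interpP w P ↔ ∃ t ∈ M.interpP w P, ∀ i, T i = {b | E w (t i) b})) ∧
  (∀ w ∈ M.worlds, ∀ c, Q.interpC w c = {b | E w (M.interpC w c) b}) ∧
  (∀ a b, M.rel a b → ∀ x ∈ M.dom a, Q.H a b {y | E a x y} = {y | E b (M.H a b x) y})

section Unravel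

/-- The worlds of the unravelling of `(M, w)`: finite `≺`-increasing sequences starting at `w`. -/
def unChains (M : KModel S W D) (w : W) : Set (List W) :=
  {l | l ≠ [] ∧ l.head? = some w ∧ l.Chain' M.rel}

/-- The one-step extension relation on chains. -/
def unStep (M : KModel S W D) (w : W) (s t : List W) : Prop :=
  s ∈ unChains M w ∧ t ∈ unChains M w ∧ ∃ u, t = s ++ [u]

/-- The accessibility relation of the unravelling: the reflexive-transitive closure of the
one-step extension relation, restricted to chains. -/
def unRel (M : KModel S W D) (w : W) (s t : List W) : Prop :=
  s ∈ unChains M w ∧ t ∈ unChains M w ∧ Relation.ReflTransGen (unStep M w) s t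

/-- `U` is the intuitionistic unravelling of `(M, w)`. -/
def IsUnravelling (M : KModel S W D) (w : W) (U : KModel S (List W) (D × List W)) : Prop :=
  U.worlds = unChains M w ∧
  (∀ s t, U.rel s t ↔ unRel M w s t) ∧
  (∀ l ∈ unChains M w, U.dom l = {p | p.2 = l ∧ p.1 ∈ M.dom (l.getLastD w)}) ∧
  (∀ l ∈ unChains M w, ∀ (P : S.Pred) (t : Fin (S.arity P) → D × List W),
      (t ∈ U.interpP l P ↔ ∃ t₀ ∈ M.interpP (l.getLastD w) P, ∀ i, t i = (t₀ i, l))) ∧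
  (∀ l ∈ unChains M w, ∀ c, U.interpC l c = (M.interpC (l.getLastD w) c, l)) ∧
  (∀ s t, unRel M w s t → ∀ x ∈ M.dom (s.getLastD w),
      U.H s t (x, s) = (M.H (s.getLastD w) (t.getLastD w) x, t))

end Unravel

/-- `(Γ, Δ)` is a successor IL-type of `(M, w, ā)`. -/
def SuccType (M : KModel S W D) (w : W) {n : ℕ} (a : Fin n → D) (Γ Δ : Set (Fml S n)) : Prop :=
  ∀ Γ' Δ' : Set (Fml S n), Γ' ⊆ Γ → Δ' ⊆ Δ → Γ'.Finite → Δ'.Finite →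
    ∃ v, M.rel w v ∧ (∀ φ ∈ Γ', Sat M v φ (fun i => M.H w v (a i))) ∧
      (∀ φ ∈ Δ', ¬ Sat M v φ (fun i => M.H w v (a i)))

/-- `Ξ` is an existential IL-type of `(M, w, ā)`. -/
def ExType (M : KModel S W D) (w : W) {n : ℕ} (a : Fin n → D) (Ξ : Set (Fml S (n + 1))) : Prop :=
  ∀ Ξ' : Set (Fml S (n + 1)), Ξ' ⊆ Ξ → Ξ'.Finite →
    ∃ b ∈ M.dom w, ∀ φ ∈ Ξ', Sat M w φ (Fin.snoc a b)

/-- `Ξ` is a universal IL-type of `(M, w, ā)`. -/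
def UnivType (M : KModel S W D) (w : W) {n : ℕ} (a : Fin n → D) (Ξ : Set (Fml S (n + 1))) : Prop :=
  ∀ Ξ' : Set (Fml S (n + 1)), Ξ' ⊆ Ξ → Ξ'.Finite →
    ∃ v, M.rel w v ∧ ∃ b ∈ M.dom v, ∀ φ ∈ Ξ', ¬ Sat M v φ (Fin.snoc (fun i => M.H w v (a i)) b)

/-- A model is IL-saturated iff it realizes all of its IL-types. -/
def Saturated (M : KModel S W D) : Prop :=
  ∀ w ∈ M.worlds, ∀ (n : ℕ) (a : Fin n → D), (∀ i, a i ∈ M.dom w) →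
    (∀ Γ Δ : Set (Fml S n), SuccType M w a Γ Δ →
       ∃ v, M.rel w v ∧ (∀ φ ∈ Γ, Sat M v φ (fun i => M.H w v (a i))) ∧
         (∀ φ ∈ Δ, ¬ Sat M v φ (fun i => M.H w v (a i)))) ∧
    (∀ Ξ : Set (Fml S (n + 1)), ExType M w a Ξ →
       ∃ b ∈ M.dom w, ∀ φ ∈ Ξ, Sat M w φ (Fin.snoc a b)) ∧
    (∀ Ξ : Set (Fml S (n + 1)), UnivType M w a Ξ →
       ∃ v, M.rel w v ∧ ∃ b ∈ M.dom v, ∀ φ ∈ Ξ, ¬ Sat M v φ (Fin.snoc (fun i => M.H w v (a i)) b))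

/-- `U` is the componentwise union of the countable chain `Ms`. -/
def IsChainUnion (Ms : ℕ → KModel S W D) (U : KModel S W D) : Prop :=
  U.worlds = ⋃ k, (Ms k).worlds ∧
  (∀ a b, U.rel a b ↔ ∃ k, (Ms k).rel a b) ∧
  (∀ w ∈ U.worlds, U.dom w = {x | ∃ k, w ∈ (Ms k).worlds ∧ x ∈ (Ms k).dom w}) ∧
  (∀ w ∈ U.worlds, ∀ (P : S.Pred) (t : Fin (S.arity P) → D), (∀ i, t i ∈ U.dom w) →
      (t ∈ U.interpP w P ↔ ∃ k, w ∈ (Ms k).worlds ∧ (∀ i, t i ∈ (Ms k).dom w) ∧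
        t ∈ (Ms k).interpP w P)) ∧
  (∀ w, ∀ k, w ∈ (Ms k).worlds → ∀ c, U.interpC w c = (Ms k).interpC w c) ∧
  (∀ a b, ∀ k, (Ms k).rel a b → ∀ x ∈ (Ms k).dom a, U.H a b x = (Ms k).H a b x)

/-- `(N, w)` is an `(f,g)`-renaming of `(M, w)` along the signature renaming `r`. -/
def IsRenamedModel (r : SigHom S T) (M : KModel S W D) (N : KModel T W D) : Prop :=
  N.worlds = M.worlds ∧
  (∀ a b, N.rel a b ↔ M.rel a b) ∧
  (∀ w ∈ M.worlds, N.dom w = M.dom w) ∧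
  (∀ w ∈ M.worlds, ∀ (P : S.Pred) (t : Fin (S.arity P) → D),
      ((fun i => t (Fin.cast (r.arity_eq P) i)) ∈ N.interpP w (r.predMap P) ↔ t ∈ M.interpP w P)) ∧
  (∀ w ∈ M.worlds, ∀ c, N.interpC w (r.constMap c) = M.interpC w c) ∧
  (∀ a b, M.rel a b → ∀ x ∈ M.dom a, N.H a b x = M.H a b x)

/-- Membership of `N` in the set `(M,w) ⊕ (c̄/ā)` of possible constant extensions:
`[M,w] ⊆ N↾Θ ⊆ M` and the fresh constants denote `ā` at `w`. -/
def InOplus (M : KModel S W D) (w : W) {n : ℕ} (a : Fin n → D)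
    (N : KModel (S.addConsts n) W D) : Prop :=
  Submodel (genSub M w) (reductHom (S.incConsts n) N) ∧
  Submodel (reductHom (S.incConsts n) N) M ∧
  (∀ i, N.interpC w (Sum.inr i) = a i)

/-!
Correct `M` into a copy of `N`: keep the worlds of `M` and add the worlds of `N` outside `h[M]`;
over a world `w` of `M` keep the objects of `M` and add the objects of `N` at `h w` outside
`g[M_w]`, and over the other worlds take the objects of `N`. The resulting `M'` is `N` transported
along the bijections `g ⊔ id` and `h ⊔ id`, so `M' ≅ N`. Isomorphisms preserve IL-types, so the
elementarity of `(g, h)` turns into the elementarity of the inclusion of `M` into `M'`.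
-/

theorem forall_snoc_mem {α : Type*} {s : Set α} {n : ℕ} {ρ : Fin n → α} {d : α}
    (hρ : ∀ i, ρ i ∈ s) (hd : d ∈ s) : ∀ i, (Fin.snoc ρ d : Fin (n + 1) → α) i ∈ s :=
  Fin.forall_fin_succ'.mpr ⟨by simpa using hρ, by simpa using hd⟩

section Isomorphism

variable {W₁ D₁ W₂ D₂ : Type*} {M : KModel S W₁ D₁} {N : KModel S W₂ D₂}
  {g : D₁ → D₂} {h : W₁ → W₂}

theorem IsIso.forall_rel_iff (hi : IsIso M N g h) {w : W₁} (hw : w ∈ M.worlds)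
    {p : W₂ → Prop} : (∀ v, N.rel (h w) v → p v) ↔ ∀ u, M.rel w u → p (h u) := by
  constructor
  · intro hp u hwu
    exact hp _ ((hi.2.2.1 w u hw (M.rel_mem hwu).2).mp hwu)
  · intro hp v hwv
    obtain ⟨u, hu, rfl⟩ := hi.1.surjOn (N.rel_mem hwv).2
    exact hp u ((hi.2.2.1 w u hw hu).mpr hwv)

theorem IsIso.forall_dom_iff (hi : IsIso M N g h) {w : W₁} (hw : w ∈ M.worlds)
    {p : D₂ → Prop} : (∀ e ∈ N.dom (h w), p e) ↔ ∀ d ∈ M.dom w, p (g d) := by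
  rw [← (hi.2.2.2.1 w hw).image_eq, Set.forall_mem_image]

theorem IsIso.exists_dom_iff (hi : IsIso M N g h) {w : W₁} (hw : w ∈ M.worlds)
    {p : D₂ → Prop} : (∃ e ∈ N.dom (h w), p e) ↔ ∃ d ∈ M.dom w, p (g d) := by
  rw [← (hi.2.2.2.1 w hw).image_eq, Set.exists_mem_image]

theorem IsIso.comp_H (hi : IsIso M N g h) {w u : W₁} (hwu : M.rel w u) {n : ℕ}
    {ρ : Fin n → D₁} (hρ : ∀ i, ρ i ∈ M.dom w) :
    g ∘ (fun i => M.H w u (ρ i)) = fun i => N.H (h w) (h u) (g (ρ i)) :=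
  funext fun i => hi.2.2.2.2.2.2 w u hwu _ (hρ i)

theorem IsIso.eval (hi : IsIso M N g h) {w : W₁} (hw : w ∈ M.worlds) {n : ℕ}
    (ρ : Fin n → D₁) (t : Term S n) : g (t.eval M w ρ) = t.eval N (h w) (g ∘ ρ) := by
  cases t with
  | var i => rfl
  | const c => exact hi.2.2.2.2.2.1 w hw c

theorem IsIso.sat_iff (hi : IsIso M N g h) {n : ℕ} (φ : Fml S n) {w : W₁}
    (hw : w ∈ M.worlds) {ρ : Fin n → D₁} (hρ : ∀ i, ρ i ∈ M.dom w) :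
    Sat M w φ ρ ↔ Sat N (h w) φ (g ∘ ρ) := by
  induction φ generalizing w with
  | atom P ts =>
    have hmem : ∀ t : Term S _, t.eval M w ρ ∈ M.dom w := fun
      | .var i => hρ i
      | .const c => M.interpC_mem hw c
    simp only [Sat]
    rw [hi.2.2.2.2.1 w hw P _ fun i => hmem _]
    simp only [hi.eval hw]
  | bot => rfl
  | and φ ψ ihφ ihψ => exact and_congr (ihφ hw hρ) (ihψ hw hρ)
  | or φ ψ ihφ ihψ => exact or_congr (ihφ hw hρ) (ihψ hw hρ)
  | imp φ ψ ihφ ihψ =>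
    simp only [Sat, Function.comp_apply]
    rw [hi.forall_rel_iff hw]
    refine forall₂_congr fun u hwu => ?_
    have hHρ : ∀ i, M.H w u (ρ i) ∈ M.dom u := fun i => M.H_mem hwu (hρ i)
    rw [← hi.comp_H hwu hρ]
    exact imp_congr (ihφ (M.rel_mem hwu).2 hHρ) (ihψ (M.rel_mem hwu).2 hHρ)
  | all φ ih =>
    simp only [Sat, Function.comp_apply]
    rw [hi.forall_rel_iff hw]
    refine forall₂_congr fun u hwu => ?_
    have hu := (M.rel_mem hwu).2
    rw [hi.forall_dom_iff hu, ← hi.comp_H hwu hρ]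
    refine forall₂_congr fun d hd => ?_
    rw [← Fin.comp_snoc]
    exact ih hu (forall_snoc_mem (fun i => M.H_mem hwu (hρ i)) hd)
  | ex φ ih =>
    simp only [Sat]
    rw [hi.exists_dom_iff hw]
    refine exists_congr fun d => and_congr_right fun hd => ?_
    rw [← Fin.comp_snoc]
    exact ih hw (forall_snoc_mem hρ hd)

theorem IsIso.tp_eq (hi : IsIso M N g h) {w : W₁} (hw : w ∈ M.worlds) {n : ℕ}
    {a : Fin n → D₁} (ha : ∀ i, a i ∈ M.dom w) : Tp M w a = Tp N (h w) (g ∘ a) := by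
  simp only [Tp, hi.sat_iff _ hw ha]

theorem IsElemEmbed.mapsTo_worlds (hgh : IsElemEmbed M N g h) :
    Set.MapsTo h M.worlds N.worlds :=
  fun w hw => (N.rel_mem ((hgh.2.2.1 w w hw hw).mp (M.rel_refl hw))).1

variable {W₃ D₃ : Type*} {M' : KModel S W₃ D₃} {g' : D₃ → D₂} {h' : W₃ → W₂}

theorem IsElemEmbed.of_isIso_comp {e : D₁ → D₃} {f : W₁ → W₃}
    (hgh : IsElemEmbed M N g h) (hi : IsIso M' N g' h')
    (hf : Set.MapsTo f M.worlds M'.worlds)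
    (he : ∀ w ∈ M.worlds, Set.MapsTo e (M.dom w) (M'.dom (f w)))
    (hhf : ∀ w ∈ M.worlds, h' (f w) = h w) (hge : ∀ x ∈ totalDom M, g' (e x) = g x) :
    IsElemEmbed M M' e f := by
  obtain ⟨hh_inj, hg_inj, hh_rel, -, hg_H, hg_tp⟩ := hgh
  have he_total : ∀ {w}, w ∈ M.worlds → ∀ {x}, x ∈ M.dom w → g' (e x) = g x :=
    fun hw _ hx => hge _ (Set.mem_biUnion hw hx)
  have hrel : ∀ a b, a ∈ M.worlds → b ∈ M.worlds → (M.rel a b ↔ M'.rel (f a) (f b)) := by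
    intro a b ha hb
    rw [hh_rel a b ha hb, hi.2.2.1 _ _ (hf ha) (hf hb), hhf a ha, hhf b hb]
  refine ⟨?_, ?_, hrel, he, ?_, ?_⟩
  · intro a ha b hb hab
    exact hh_inj ha hb (by rw [← hhf a ha, ← hhf b hb, hab])
  · intro x hx y hy hxy
    exact hg_inj hx hy (by rw [← hge x hx, ← hge y hy, hxy])
  · intro a b hab x hx
    obtain ⟨ha, hb⟩ := M.rel_mem hab
    have hab' := (hrel a b ha hb).mp hab
    refine (hi.2.2.2.1 (f b) (hf hb)).injOn (he b hb (M.H_mem hab hx))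
      (M'.H_mem hab' (he a ha hx)) ?_
    rw [hi.2.2.2.2.2.2 _ _ hab' _ (he a ha hx), he_total hb (M.H_mem hab hx), hg_H a b hab x hx,
      he_total ha hx, hhf a ha, hhf b hb]
  · intro w hw n a ha
    rw [hg_tp w hw n a ha, hi.tp_eq (hf hw) fun i => he w hw (ha i), hhf w hw]
    congr 2
    exact funext fun i => (he_total hw (ha i)).symm

end Isomorphism

theorem bijOn_image_of_leftInverse {α β : Type*} {f : α → β} {g : β → α}
    (hgf : Function.LeftInverse g f) (s : Set α) : Set.BijOn g (f '' s) s :=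
  Set.InvOn.bijOn ⟨(hgf.leftInvOn s).rightInvOn_image, hgf.leftInvOn s⟩
    (by rintro _ ⟨x, hx, rfl⟩; rwa [hgf x]) (Set.mapsTo_image f s)

section Comap

variable {α β W' D' : Type*}

def KModel.comap (N : KModel S W' D') (X : Set α) (ĥ : α → W') (ĝ : β → D') (lift : α → D' → β)
    (hmaps : Set.MapsTo ĥ X N.worlds) (hinj : Set.InjOn ĥ X) (hlift : ∀ x e, ĝ (lift x e) = e) :
    KModel S α β where
  worlds := X
  rel x y := N.rel (ĥ x) (ĥ y) ∧ x ∈ X ∧ y ∈ X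
  rel_mem hr := hr.2
  rel_refl hx := ⟨N.rel_refl (hmaps hx), hx, hx⟩
  rel_trans hxy hyz := ⟨N.rel_trans hxy.1 hyz.1, hxy.2.1, hyz.2.2⟩
  rel_antisymm hxy hyx := hinj hxy.2.1 hxy.2.2 (N.rel_antisymm hxy.1 hyx.1)
  dom x := lift x '' N.dom (ĥ x)
  dom_disjoint := by
    rintro x y hx hy hne
    rw [Set.disjoint_left]
    rintro _ ⟨e, he, rfl⟩ ⟨e', he', hee'⟩
    have hee : e' = e := by simpa only [hlift] using congrArg ĝ hee'
    subst hee
    exact Set.disjoint_left.mp (N.dom_disjoint (hmaps hx) (hmaps hy) (hinj.ne hx hy hne)) he he'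
  interpP x P := {t | ĝ ∘ t ∈ N.interpP (ĥ x) P}
  interpC x c := lift x (N.interpC (ĥ x) c)
  interpC_mem hx c := ⟨_, N.interpC_mem (hmaps hx) c, rfl⟩
  H x y d := lift y (N.H (ĥ x) (ĥ y) (ĝ d))
  H_mem := by
    rintro x y hxy _ ⟨e, he, rfl⟩
    exact ⟨_, by rw [hlift]; exact N.H_mem hxy.1 he, rfl⟩
  H_id := by
    rintro x hx _ ⟨e, he, rfl⟩
    rw [hlift, N.H_id (hmaps hx) he]
  H_comp := by
    rintro x y z hxy hyz _ ⟨e, he, rfl⟩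
    rw [hlift, hlift, N.H_comp hxy.1 hyz.1 he]
  H_pred := by
    rintro x y hxy P t ht hdom
    simp only [Set.mem_ofPred_eq, Function.comp_def, hlift] at ht ⊢
    refine N.H_pred hxy.1 ht fun i => ?_
    obtain ⟨e, he, hei⟩ := hdom i
    rw [← hei, hlift]
    exact he
  H_const hxy c := by
    rw [hlift, N.H_const hxy.1 c]

variable {N : KModel S W' D'} {X : Set α} {ĥ : α → W'} {ĝ : β → D'} {lift : α → D' → β}
  {hmaps : Set.MapsTo ĥ X N.worlds} {hinj : Set.InjOn ĥ X} {hlift : ∀ x e, ĝ (lift x e) = e}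

theorem KModel.comap_isIso (hsurj : Set.SurjOn ĥ X N.worlds) :
    IsIso (N.comap X ĥ ĝ lift hmaps hinj hlift) N ĝ ĥ := by
  refine ⟨⟨hmaps, hinj, hsurj⟩, ⟨?_, ?_, ?_⟩,
    fun x y hx hy => ⟨fun hr => hr.1, fun hr => ⟨hr, hx, hy⟩⟩,
    fun x _ => bijOn_image_of_leftInverse (hlift x) _, fun _ _ _ _ _ => Iff.rfl,
    fun x _ c => hlift x _, fun x y _ d _ => hlift y _⟩
  · intro d hd
    obtain ⟨x, hx, hdx⟩ := Set.mem_iUnion₂.mp hd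
    exact Set.mem_biUnion (hmaps hx) ((bijOn_image_of_leftInverse (hlift x) _).mapsTo hdx)
  · intro d hd d' hd' hdd'
    obtain ⟨x, hx, e, he, rfl⟩ := Set.mem_iUnion₂.mp hd
    obtain ⟨x', hx', e', he', rfl⟩ := Set.mem_iUnion₂.mp hd'
    rw [hlift, hlift] at hdd'
    subst hdd'
    obtain rfl : x = x' := by
      by_contra hne
      exact Set.disjoint_left.mp (N.dom_disjoint (hmaps hx) (hmaps hx') (hinj.ne hx hx' hne)) he he'
    rfl
  · intro e he
    obtain ⟨v, hv, hev⟩ := Set.mem_iUnion₂.mp he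
    obtain ⟨x, hx, rfl⟩ := hsurj hv
    exact ⟨lift x e, Set.mem_biUnion hx ⟨e, hev, rfl⟩, hlift x e⟩

end Comap

section Correction

variable {W' D' : Type*}

def correctionWorlds (M : KModel S W D) (N : KModel S W' D') (h : W → W') : Set (W ⊕ W') :=
  Sum.inl '' M.worlds ∪ Sum.inr '' (N.worlds \ h '' M.worlds)

open Classical in
noncomputable def correctionLift (M : KModel S W D) (g : D → D') : W ⊕ W' → D' → D ⊕ D'
  | .inl w, e => if he : ∃ a ∈ M.dom w, g a = e then .inl he.choose else .inr e
  | .inr _, e => .inr e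

theorem elim_correctionLift (M : KModel S W D) (g : D → D') (x : W ⊕ W') (e : D') :
    Sum.elim g id (correctionLift M g x e) = e := by
  rcases x with w | v
  · by_cases he : ∃ a ∈ M.dom w, g a = e
    · simpa only [correctionLift, dif_pos he, Sum.elim_inl] using he.choose_spec.2
    · simp only [correctionLift, dif_neg he, Sum.elim_inr, id]
  · rfl

theorem correctionLift_inl {M : KModel S W D} {g : D → D'} (hg : Set.InjOn g (totalDom M))
    {w : W} (hw : w ∈ M.worlds) {a : D} (ha : a ∈ M.dom w) :
    correctionLift (W' := W') M g (.inl w) (g a) = .inl a := by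
  have he : ∃ a' ∈ M.dom w, g a' = g a := ⟨a, ha, rfl⟩
  simp only [correctionLift, dif_pos he, Sum.inl.injEq]
  exact hg (Set.mem_biUnion hw he.choose_spec.1) (Set.mem_biUnion hw ha) he.choose_spec.2

theorem bijOn_correctionWorlds {M : KModel S W D} {N : KModel S W' D'} {h : W → W'}
    (hmaps : Set.MapsTo h M.worlds N.worlds) (hinj : Set.InjOn h M.worlds) :
    Set.BijOn (Sum.elim h id) (correctionWorlds M N h) N.worlds := by
  refine ⟨?_, ?_, fun v hv => ?_⟩
  · rintro _ (⟨w, hw, rfl⟩ | ⟨v, hv, rfl⟩)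
    exacts [hmaps hw, hv.1]
  · rintro _ (⟨w, hw, rfl⟩ | ⟨v, hv, rfl⟩) _ (⟨w', hw', rfl⟩ | ⟨v', hv', rfl⟩) hxy
    · exact congrArg Sum.inl (hinj hw hw' hxy)
    · exact absurd ⟨w, hw, hxy⟩ hv'.2
    · exact absurd ⟨w', hw', hxy.symm⟩ hv.2
    · exact congrArg Sum.inr hxy
  · by_cases hvh : v ∈ h '' M.worlds
    · obtain ⟨w, hw, rfl⟩ := hvh
      exact ⟨.inl w, Or.inl ⟨w, hw, rfl⟩, rfl⟩
    · exact ⟨.inr v, Or.inr ⟨v, ⟨hv, hvh⟩, rfl⟩, rfl⟩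

end Correction

/-- The intuitionistic principle of isomorphic correction: an IL-elementary embedding of `M`
into `N` factors as an IL-elementary extension `M'` of (a canonical copy of) `M` together
with an isomorphism of `M'` onto `N` extending the embedding. -/
theorem isomorphic_correction {S : Sig} {W D W' D' : Type*}
    (M : KModel S W D) (N : KModel S W' D') (g : D → D') (h : W → W')
    (hgh : IsElemEmbed M N g h) :
    ∃ (M' : KModel S (W ⊕ W') (D ⊕ D')) (g' : D ⊕ D' → D') (h' : W ⊕ W' → W'),
      (∀ x ∈ totalDom M, g' (Sum.inl x) = g x) ∧
      (∀ w ∈ M.worlds, h' (Sum.inl w) = h w) ∧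
      IsElemEmbed M M' Sum.inl Sum.inl ∧
      IsIso M' N g' h' := by
  have hworlds := bijOn_correctionWorlds (N := N) hgh.mapsTo_worlds hgh.1
  have hiso := KModel.comap_isIso (hmaps := hworlds.mapsTo) (hinj := hworlds.injOn)
    (hlift := elim_correctionLift M g) hworlds.surjOn
  refine ⟨_, _, _, fun _ _ => rfl, fun _ _ => rfl, hgh.of_isIso_comp hiso ?_ ?_
    (fun _ _ => rfl) (fun _ _ => rfl), hiso⟩
  · exact fun w hw => Or.inl ⟨w, hw, rfl⟩
  · exact fun w hw d hd => ⟨g d, hgh.2.2.2.1 w hw hd, correctionLift_inl hgh.2.1 hw hd⟩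
end

section
/- In the unravelling M^{un(w)}, the complete intuitionistic type of a tuple depends only on the last world of the sequence: for ū_n, v̄_k ∈ W^{un(w)} with u_n = v_k, and any ā_m ∈ A^m_{v_k}, we have Tp(M^{un(w)}, ū_n, ā_m ⊙ ū_n) = Tp(M^{un(w)}, v̄_k, ā_m ⊙ v̄_k). -/
set_option linter.unusedVariables false

universe u

variable {S T : Sig} {W D : Type*}

/-!
A chain `l` of the unravelling satisfies a formula at the tuple `ā` tagged by `l` exactly when
the last world of `l` satisfies it at `ā` in `M`. Domains, interpretations and transition maps
at `l` are those of `M` at its last world, and the successors of `l` end at exactly the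
successors of that world (extend the chain by one step), so the Kripke clauses for `→` and `∀`
match by induction on the formula. Two chains with the same last world therefore
both have the type of `ā` at that world in `M`.
-/

section Unravelling

theorem List.getLastD_eq_getLast {α : Type*} {l : List α} (hl : l ≠ []) (d : α) :
    l.getLastD d = l.getLast hl := by
  simp [List.getLastD_eq_getLast?, List.getLast?_eq_some_getLast hl]

theorem Fin.snoc_pair {n : ℕ} {α β : Type*} (a : Fin n → α) (x : α) (b : β) :
    Fin.snoc (α := fun _ => α × β) (fun i => (a i, b)) (x, b) =
      fun i => (Fin.snoc (α := fun _ => α) a x i, b) :=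
  (Fin.comp_snoc (·, b) a x).symm

theorem Fin.snoc_mem {n : ℕ} {α : Type*} {s : Set α} {a : Fin n → α} (ha : ∀ i, a i ∈ s)
    {y : α} (hy : y ∈ s) (i : Fin (n + 1)) : Fin.snoc (α := fun _ => α) a y i ∈ s :=
  Fin.lastCases (by simpa using hy) (by simpa using ha) i

variable {M : KModel S W D} {w : W}

theorem unRel.mem_unChains_right {s t : List W} (h : unRel M w s t) : t ∈ unChains M w :=
  h.2.1

theorem KModel.rel_of_reflTransGen {a b : W} (ha : a ∈ M.worlds)
    (h : Relation.ReflTransGen M.rel a b) : M.rel a b := by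
  induction h with
  | refl => exact M.rel_refl ha
  | tail _ hbc hab => exact M.rel_trans hab hbc

theorem getLastD_mem_worlds_of_mem_unChains (hw : w ∈ M.worlds) {l : List W}
    (hl : l ∈ unChains M w) : l.getLastD w ∈ M.worlds := by
  obtain ⟨hne, hhead, hchain⟩ := hl
  have hpath := List.relationReflTransGen_of_exists_isChain l hchain hne
  rw [(List.head_eq_iff_head?_eq_some hne).mpr hhead, ← List.getLastD_eq_getLast hne w] at hpath
  exact (M.rel_mem (M.rel_of_reflTransGen hw hpath)).2

theorem unRel.rel_getLastD (hw : w ∈ M.worlds) {s t : List W} (h : unRel M w s t) :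
    M.rel (s.getLastD w) (t.getLastD w) := by
  obtain ⟨hs, -, hst⟩ := h
  induction hst with
  | refl => exact M.rel_refl (getLastD_mem_worlds_of_mem_unChains hw hs)
  | tail _ hstep ih =>
    obtain ⟨hs', ht, v, rfl⟩ := hstep
    have hlink := ht.2.2.rel_getLast_head_of_append hs'.1 (List.cons_ne_nil v [])
    rw [← List.getLastD_eq_getLast hs'.1 w] at hlink
    rw [List.getLastD_concat]
    exact M.rel_trans ih hlink

theorem unRel_append_singleton {l : List W} (hl : l ∈ unChains M w) {v : W}
    (hv : M.rel (l.getLastD w) v) : unRel M w l (l ++ [v]) := by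
  obtain ⟨hne, hhead, hchain⟩ := hl
  have hlv : l ++ [v] ∈ unChains M w := by
    refine ⟨by simp, by rw [List.head?_append_of_ne_nil l hne, hhead], ?_⟩
    refine hchain.append (List.isChain_singleton v) ?_
    rw [List.getLast?_eq_some_getLast hne, ← List.getLastD_eq_getLast hne w]
    simpa using hv
  exact ⟨⟨hne, hhead, hchain⟩, hlv, .single ⟨⟨hne, hhead, hchain⟩, hlv, v, rfl⟩⟩

theorem forall_unRel_iff (hw : w ∈ M.worlds) {l : List W} (hl : l ∈ unChains M w)
    {P : W → Prop} :
    (∀ t, unRel M w l t → P (t.getLastD w)) ↔ ∀ v, M.rel (l.getLastD w) v → P v := by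
  refine ⟨fun h v hv => ?_, fun h t ht => h _ (ht.rel_getLastD hw)⟩
  simpa using h _ (unRel_append_singleton hl hv)

variable {U : KModel S (List W) (D × List W)}

theorem IsUnravelling.rel_iff (hU : IsUnravelling M w U) {s t : List W} :
    U.rel s t ↔ unRel M w s t :=
  hU.2.1 s t

theorem IsUnravelling.forall_mem_dom_iff (hU : IsUnravelling M w U) {l : List W}
    (hl : l ∈ unChains M w) {p : D × List W → Prop} :
    (∀ x ∈ U.dom l, p x) ↔ ∀ y ∈ M.dom (l.getLastD w), p (y, l) := by
  simp [hU.2.2.1 l hl]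

theorem IsUnravelling.exists_mem_dom_iff (hU : IsUnravelling M w U) {l : List W}
    (hl : l ∈ unChains M w) {p : D × List W → Prop} :
    (∃ x ∈ U.dom l, p x) ↔ ∃ y ∈ M.dom (l.getLastD w), p (y, l) := by
  simp [hU.2.2.1 l hl]

theorem IsUnravelling.pair_mem_interpP_iff (hU : IsUnravelling M w U) {l : List W}
    (hl : l ∈ unChains M w) {P : S.Pred} {t : Fin (S.arity P) → D} :
    (fun i => (t i, l)) ∈ U.interpP l P ↔ t ∈ M.interpP (l.getLastD w) P := by
  simp [hU.2.2.2.1 l hl, ← funext_iff]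

theorem IsUnravelling.eval_pair (hU : IsUnravelling M w U) {l : List W}
    (hl : l ∈ unChains M w) {n : ℕ} (a : Fin n → D) (τ : Term S n) :
    Term.eval U l (fun i => (a i, l)) τ = (Term.eval M (l.getLastD w) a τ, l) := by
  cases τ with
  | var i => rfl
  | const c => exact hU.2.2.2.2.1 l hl c

theorem IsUnravelling.H_pair (hU : IsUnravelling M w U) {s t : List W} (hst : unRel M w s t)
    {n : ℕ} {a : Fin n → D} (ha : ∀ i, a i ∈ M.dom (s.getLastD w)) :
    (fun i => U.H s t (a i, s)) = fun i => (M.H (s.getLastD w) (t.getLastD w) (a i), t) :=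
  funext fun i => hU.2.2.2.2.2 s t hst (a i) (ha i)

theorem IsUnravelling.sat_iff (hw : w ∈ M.worlds) (hU : IsUnravelling M w U) {n : ℕ}
    (φ : Fml S n) {l : List W} (hl : l ∈ unChains M w) {a : Fin n → D}
    (ha : ∀ i, a i ∈ M.dom (l.getLastD w)) :
    Sat U l φ (fun i => (a i, l)) ↔ Sat M (l.getLastD w) φ a := by
  induction φ generalizing l with
  | atom P ts =>
    simp only [Sat, hU.eval_pair hl]
    exact hU.pair_mem_interpP_iff hl
  | bot => exact Iff.rfl
  | and φ ψ ihφ ihψ => exact and_congr (ihφ hl ha) (ihψ hl ha)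
  | or φ ψ ihφ ihψ => exact or_congr (ihφ hl ha) (ihψ hl ha)
  | imp φ ψ ihφ ihψ =>
    simp only [Sat, hU.rel_iff]
    rw [← forall_unRel_iff hw hl]
    refine forall₂_congr fun t ht => ?_
    have hb := fun i => M.H_mem (ht.rel_getLastD hw) (ha i)
    rw [hU.H_pair ht ha, ihφ ht.mem_unChains_right hb, ihψ ht.mem_unChains_right hb]
  | all φ ih =>
    simp only [Sat, hU.rel_iff]
    rw [← forall_unRel_iff hw hl]
    refine forall₂_congr fun t ht => ?_
    have hb := fun i => M.H_mem (ht.rel_getLastD hw) (ha i)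
    rw [hU.H_pair ht ha, hU.forall_mem_dom_iff ht.mem_unChains_right]
    refine forall₂_congr fun y hy => ?_
    rw [Fin.snoc_pair]
    exact ih ht.mem_unChains_right (Fin.snoc_mem hb hy)
  | ex φ ih =>
    simp only [Sat, hU.exists_mem_dom_iff hl, Fin.snoc_pair]
    exact exists_congr fun y => and_congr_right fun hy => ih hl (Fin.snoc_mem ha hy)

theorem IsUnravelling.tp_eq (hw : w ∈ M.worlds) (hU : IsUnravelling M w U) {l : List W}
    (hl : l ∈ unChains M w) {n : ℕ} {a : Fin n → D} (ha : ∀ i, a i ∈ M.dom (l.getLastD w)) :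
    Tp U l (fun i => (a i, l)) = Tp M (l.getLastD w) a := by
  simp only [Tp, hU.sat_iff hw _ hl ha]

end Unravelling

/-- In the unravelling, the complete IL-type of a tuple depends only on the last world of
the sequence. -/
theorem unravelling_type_last {S : Sig} {W D : Type*} (M : KModel S W D) (w : W)
    (hw : w ∈ M.worlds) (U : KModel S (List W) (D × List W)) (hU : IsUnravelling M w U)
    (l₁ l₂ : List W) (h₁ : l₁ ∈ unChains M w) (h₂ : l₂ ∈ unChains M w)
    (hlast : l₁.getLastD w = l₂.getLastD w) {n : ℕ} (a : Fin n → D)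
    (ha : ∀ i, a i ∈ M.dom (l₁.getLastD w)) :
    Tp U l₁ (fun i => (a i, l₁)) = Tp U l₂ (fun i => (a i, l₂)) := by
  rw [hU.tp_eq hw h₁ ha, hU.tp_eq hw h₂ (hlast ▸ ha), hlast]
end

section
/- The canonical relation between a model and its quotient by a congruence is an asimulation in both directions: with M a Kripke Θ-model and ≈ a congruence on M, the relation B = {((w; ā_m), (w; [ā_m]_{≈(w)})) and its converse pairs : w ∈ W, ā_m ∈ A_w^m} is an IL-asimulation both from (M, v, ā_n) to (M_≈, v, [ā_n]_{≈(v)}) and from (M_≈, v, [ā_n]_{≈(v)}) to (M, v, ā_n), for every world v and tuple ā_n ∈ A_v^n. Consequently, the complete IL-types coincide: Tp(M, v, ā_n) = Tp(M_≈, v, [ā_n]_{≈(v)}). -/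
/-! The quotient has the same worlds, order and homomorphisms as `M`, acting on classes, so every
step in one model (to a later world, or to a new object) is matched by the same step in the other.
Atoms agree because a tuple of classes lies in a predicate iff some, hence by compatibility every,
tuple of representatives does. Asimulations in both directions transfer the truth of intuitionistic
formulas both ways, by induction on the formula, so the types coincide. -/

set_option linter.unusedVariables false

universe u

variable {S T : Sig} {W D : Type*}

lemma snoc_mem {α : Type*} {A : Set α} {k : ℕ} {f : Fin k → α} {x : α}
    (hf : ∀ i, f i ∈ A) (hx : x ∈ A) : ∀ i, (Fin.snoc f x : Fin (k + 1) → α) i ∈ A :=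
  fun i => Fin.lastCases (by simpa using hx) (fun j => by simpa using hf j) i

lemma Term.eval_mem {M : KModel S W D} {w : W} {k : ℕ} {α : Fin k → D}
    (hw : w ∈ M.worlds) (hα : ∀ i, α i ∈ M.dom w) (t : Term S k) :
    Term.eval M w α t ∈ M.dom w := by
  cases t with
  | var i => exact hα i
  | const c => exact M.interpC_mem hw c

section Preservation

variable {W₁ D₁ W₂ D₂ : Type*} {M₁ : KModel S W₁ D₁} {M₂ : KModel S W₂ D₂}
  {F : ∀ k : ℕ, W₁ → (Fin k → D₁) → W₂ → (Fin k → D₂) → Prop}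
  {G : ∀ k : ℕ, W₂ → (Fin k → D₂) → W₁ → (Fin k → D₁) → Prop} {n : ℕ}

def Preserves (M₁ : KModel S W₁ D₁) (M₂ : KModel S W₂ D₂)
    (F : ∀ k : ℕ, W₁ → (Fin k → D₁) → W₂ → (Fin k → D₂) → Prop) {n : ℕ} (φ : Fml S n) : Prop :=
  ∀ w α v β, F n w α v β → (∀ i, α i ∈ M₁.dom w) → (∀ i, β i ∈ M₂.dom v) →
    Sat M₁ w φ α → Sat M₂ v φ β

lemma preserves_bot : Preserves M₁ M₂ F (.bot : Fml S n) :=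
  fun _ _ _ _ _ _ _ h => h.elim

lemma Preserves.and {φ ψ : Fml S n} (hφ : Preserves M₁ M₂ F φ) (hψ : Preserves M₁ M₂ F ψ) :
    Preserves M₁ M₂ F (.and φ ψ) :=
  fun w α v β hF hα hβ h => ⟨hφ w α v β hF hα hβ h.1, hψ w α v β hF hα hβ h.2⟩

lemma Preserves.or {φ ψ : Fml S n} (hφ : Preserves M₁ M₂ F φ) (hψ : Preserves M₁ M₂ F ψ) :
    Preserves M₁ M₂ F (.or φ ψ) :=
  fun w α v β hF hα hβ h => h.imp (hφ w α v β hF hα hβ) (hψ w α v β hF hα hβ)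

namespace AsimDir

lemma preserves_atom (h : AsimDir M₁ M₂ F G) (P : S.Pred) (ts : Fin (S.arity P) → Term S n) :
    Preserves M₁ M₂ F (.atom P ts) :=
  fun w α v β hF hα hβ => (h n w α v β hF hα hβ).1 P ts

lemma preserves_imp (h : AsimDir M₁ M₂ F G) {φ ψ : Fml S n}
    (hφ : Preserves M₂ M₁ G φ) (hψ : Preserves M₁ M₂ F ψ) :
    Preserves M₁ M₂ F (.imp φ ψ) := by
  intro w α v β hF hα hβ hsat t hvt hφt
  obtain ⟨u, hwu, hFu, hGu⟩ := (h n w α v β hF hα hβ).2.1 t hvt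
  have hαu : ∀ i, M₁.H w u (α i) ∈ M₁.dom u := fun i => M₁.H_mem hwu (hα i)
  have hβt : ∀ i, M₂.H v t (β i) ∈ M₂.dom t := fun i => M₂.H_mem hvt (hβ i)
  exact hψ u _ t _ hFu hαu hβt (hsat u hwu (hφ t _ u _ hGu hβt hαu hφt))

lemma preserves_all (h : AsimDir M₁ M₂ F G) {φ : Fml S (n + 1)} (hφ : Preserves M₁ M₂ F φ) :
    Preserves M₁ M₂ F (.all φ) := by
  intro w α v β hF hα hβ hsat t hvt b hb
  obtain ⟨u, hwu, a, ha, hFu⟩ := (h n w α v β hF hα hβ).2.2.2 t hvt b hb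
  exact hφ u _ t _ hFu (snoc_mem (fun i => M₁.H_mem hwu (hα i)) ha)
    (snoc_mem (fun i => M₂.H_mem hvt (hβ i)) hb) (hsat u hwu a ha)

lemma preserves_ex (h : AsimDir M₁ M₂ F G) {φ : Fml S (n + 1)} (hφ : Preserves M₁ M₂ F φ) :
    Preserves M₁ M₂ F (.ex φ) := by
  rintro w α v β hF hα hβ ⟨a, ha, hsat⟩
  obtain ⟨b, hb, hFb⟩ := (h n w α v β hF hα hβ).2.2.1 a ha
  exact ⟨b, hb, hφ w _ v _ hFb (snoc_mem hα ha) (snoc_mem hβ hb) hsat⟩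

end AsimDir

-- Both directions are proved together: the antecedent of an implication travels backwards.
lemma IsAsim.preserves (h : IsAsim M₁ M₂ F G) (φ : Fml S n) :
    Preserves M₁ M₂ F φ ∧ Preserves M₂ M₁ G φ := by
  induction φ with
  | atom P ts => exact ⟨h.1.preserves_atom P ts, h.2.preserves_atom P ts⟩
  | bot => exact ⟨preserves_bot, preserves_bot⟩
  | and φ ψ ihφ ihψ => exact ⟨ihφ.1.and ihψ.1, ihφ.2.and ihψ.2⟩
  | or φ ψ ihφ ihψ => exact ⟨ihφ.1.or ihψ.1, ihφ.2.or ihψ.2⟩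
  | imp φ ψ ihφ ihψ => exact ⟨h.1.preserves_imp ihφ.2 ihψ.1, h.2.preserves_imp ihφ.1 ihψ.2⟩
  | all φ ih => exact ⟨h.1.preserves_all ih.1, h.2.preserves_all ih.2⟩
  | ex φ ih => exact ⟨h.1.preserves_ex ih.1, h.2.preserves_ex ih.2⟩

lemma IsAsim.tp_eq (h : IsAsim M₁ M₂ F G) {w : W₁} {v : W₂} {a : Fin n → D₁} {b : Fin n → D₂}
    (hF : F n w a v b) (hG : G n v b w a) (ha : ∀ i, a i ∈ M₁.dom w)
    (hb : ∀ i, b i ∈ M₂.dom v) : Tp M₁ w a = Tp M₂ v b := by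
  have hsat : ∀ φ : Fml S n, Sat M₁ w φ a ↔ Sat M₂ v φ b := fun φ =>
    ⟨(h.preserves φ).1 w a v b hF ha hb, (h.preserves φ).2 v b w a hG hb ha⟩
  simp only [Tp, hsat]

end Preservation

section Quotient

variable {M : KModel S W D} {E : W → D → D → Prop} {Q : KModel S W (Set D)}
  {k : ℕ} {w : W} {α : Fin k → D}

/-- The relation `B` of the paper, pairing `(u; α)` with `(u; [α]_{≈(u)})`. -/
def quotRel (M : KModel S W D) (E : W → D → D → Prop) (k : ℕ) (u : W) (α : Fin k → D) (s : W)
    (β : Fin k → Set D) : Prop :=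
  s = u ∧ u ∈ M.worlds ∧ (∀ i, α i ∈ M.dom u) ∧ (∀ i, β i = {y | E u (α i) y})

lemma quotRel_snoc {u : W} {β : Fin k → Set D} (h : quotRel M E k u α u β) {x : D}
    (hx : x ∈ M.dom u) :
    quotRel M E (k + 1) u (Fin.snoc α x) u (Fin.snoc β {y | E u x y}) := by
  obtain ⟨-, hu, hα, hβ⟩ := h
  refine ⟨rfl, hu, snoc_mem hα hx, fun i => ?_⟩
  obtain rfl : β = fun i => {y | E u (α i) y} := funext hβ
  exact congrFun (Fin.comp_snoc (fun z => {y | E u z y}) α x).symm i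

namespace IsQuotient

lemma rel_iff (hQ : IsQuotient M E Q) {a b : W} : Q.rel a b ↔ M.rel a b :=
  hQ.2.1 a b

lemma mem_dom_iff (hQ : IsQuotient M E Q) (hw : w ∈ M.worlds) {s : Set D} :
    s ∈ Q.dom w ↔ ∃ x ∈ M.dom w, s = {y | E w x y} := by
  rw [hQ.2.2.1 w hw]
  rfl

lemma class_mem_dom (hQ : IsQuotient M E Q) (hw : w ∈ M.worlds) {x : D} (hx : x ∈ M.dom w) :
    {y | E w x y} ∈ Q.dom w :=
  (hQ.mem_dom_iff hw).2 ⟨x, hx, rfl⟩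

lemma H_class (hQ : IsQuotient M E Q) {a b : W} (hab : M.rel a b) {x : D} (hx : x ∈ M.dom a) :
    Q.H a b {y | E a x y} = {y | E b (M.H a b x) y} :=
  hQ.2.2.2.2.2 a b hab x hx

lemma eval_class (hQ : IsQuotient M E Q) (hw : w ∈ M.worlds) (t : Term S k) :
    Term.eval Q w (fun i => {y | E w (α i) y}) t = {y | E w (Term.eval M w α t) y} := by
  cases t with
  | var i => rfl
  | const c => exact hQ.2.2.2.2.1 w hw c

lemma sat_atom_iff (hQ : IsQuotient M E Q) (hw : w ∈ M.worlds) (hα : ∀ i, α i ∈ M.dom w)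
    (P : S.Pred) (ts : Fin (S.arity P) → Term S k) :
    Sat Q w (.atom P ts) (fun i => {y | E w (α i) y}) ↔
      ∃ t ∈ M.interpP w P, ∀ i, {y | E w (t i) y} = {y | E w (Term.eval M w α (ts i)) y} := by
  show (fun i => Term.eval Q w _ (ts i)) ∈ Q.interpP w P ↔ _
  simp only [hQ.eval_class hw]
  rw [hQ.2.2.2.1 w hw P _ fun i => hQ.class_mem_dom hw (Term.eval_mem hw hα (ts i))]
  simp only [eq_comm]

lemma sat_atom (hQ : IsQuotient M E Q) (hw : w ∈ M.worlds) (hα : ∀ i, α i ∈ M.dom w)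
    (P : S.Pred) (ts : Fin (S.arity P) → Term S k) (h : Sat M w (.atom P ts) α) :
    Sat Q w (.atom P ts) (fun i => {y | E w (α i) y}) :=
  (hQ.sat_atom_iff hw hα P ts).2 ⟨_, h, fun _ => rfl⟩

-- A representative tuple of the classes lies in `P`; by compatibility so does every other one.
lemma sat_atom_of_class (hE : IsCong M E) (hQ : IsQuotient M E Q) (hw : w ∈ M.worlds)
    (hα : ∀ i, α i ∈ M.dom w) (P : S.Pred) (ts : Fin (S.arity P) → Term S k)
    (h : Sat Q w (.atom P ts) (fun i => {y | E w (α i) y})) : Sat M w (.atom P ts) α := by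
  obtain ⟨t, ht, hcls⟩ := (hQ.sat_atom_iff hw hα P ts).1 h
  have hE_t : ∀ i, E w (t i) (Term.eval M w α (ts i)) := fun i => by
    change _ ∈ {y | E w (t i) y}
    rw [hcls i]
    exact hE.1 w hw _ (Term.eval_mem hw hα (ts i))
  exact (hE.2.2.2.2.2 w hw P t _ hE_t).1 ht

lemma quotRel_H (hQ : IsQuotient M E Q) {u t : W} {β : Fin k → Set D}
    (h : quotRel M E k u α u β) (hut : M.rel u t) :
    quotRel M E k t (fun i => M.H u t (α i)) t (fun i => Q.H u t (β i)) := by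
  obtain ⟨-, -, hα, hβ⟩ := h
  exact ⟨rfl, (M.rel_mem hut).2, fun i => M.H_mem hut (hα i),
    fun i => (congrArg (Q.H u t) (hβ i)).trans (hQ.H_class hut (hα i))⟩

theorem asimDir (hQ : IsQuotient M E Q) :
    AsimDir M Q (quotRel M E) (fun k s β u α => quotRel M E k u α s β) := by
  intro k u α s β hB hα _
  obtain ⟨rfl, hu, -, hβ⟩ := id hB
  obtain rfl : β = fun i => {y | E s (α i) y} := funext hβ
  refine ⟨hQ.sat_atom hu hα, fun t hst => ?_, fun x hx => ?_, fun t hst b hb => ?_⟩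
  · have hst := hQ.rel_iff.1 hst
    exact ⟨t, hst, hQ.quotRel_H hB hst, hQ.quotRel_H hB hst⟩
  · exact ⟨_, hQ.class_mem_dom hu hx, quotRel_snoc hB hx⟩
  · have hst := hQ.rel_iff.1 hst
    obtain ⟨x, hx, rfl⟩ := (hQ.mem_dom_iff (M.rel_mem hst).2).1 hb
    exact ⟨t, hst, x, hx, quotRel_snoc (hQ.quotRel_H hB hst) hx⟩

theorem asimDir_symm (hE : IsCong M E) (hQ : IsQuotient M E Q) :
    AsimDir Q M (fun k s β u α => quotRel M E k u α s β) (quotRel M E) := by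
  intro k s β u α hB _ hα
  obtain ⟨rfl, hu, -, hβ⟩ := id hB
  obtain rfl : β = fun i => {y | E s (α i) y} := funext hβ
  refine ⟨hQ.sat_atom_of_class hE hu hα, fun t hst => ?_, fun b hb => ?_, fun t hst x hx => ?_⟩
  · exact ⟨t, hQ.rel_iff.2 hst, hQ.quotRel_H hB hst, hQ.quotRel_H hB hst⟩
  · obtain ⟨x, hx, rfl⟩ := (hQ.mem_dom_iff hu).1 hb
    exact ⟨x, hx, quotRel_snoc hB hx⟩
  · exact ⟨t, hQ.rel_iff.2 hst, _, hQ.class_mem_dom (M.rel_mem hst).2 hx,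
      quotRel_snoc (hQ.quotRel_H hB hst) hx⟩

end IsQuotient

end Quotient

/-- The canonical relation between a model and its quotient by a congruence is an
IL-asimulation in both directions; consequently the complete IL-types coincide. -/
theorem quotient_asim {S : Sig} {W D : Type*} (M : KModel S W D) (E : W → D → D → Prop)
    (hE : IsCong M E) (Q : KModel S W (Set D)) (hQ : IsQuotient M E Q)
    (v : W) (hv : v ∈ M.worlds) {n : ℕ} (a : Fin n → D) (ha : ∀ i, a i ∈ M.dom v) :
    AsimFrom M v a Q v (fun i => {y | E v (a i) y})
      (fun k u α s β => s = u ∧ u ∈ M.worlds ∧ (∀ i, α i ∈ M.dom u) ∧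
        (∀ i, β i = {y | E u (α i) y}))
      (fun k s β u α => s = u ∧ u ∈ M.worlds ∧ (∀ i, α i ∈ M.dom u) ∧
        (∀ i, β i = {y | E u (α i) y})) ∧
    AsimFrom Q v (fun i => {y | E v (a i) y}) M v a
      (fun k s β u α => s = u ∧ u ∈ M.worlds ∧ (∀ i, α i ∈ M.dom u) ∧
        (∀ i, β i = {y | E u (α i) y}))
      (fun k u α s β => s = u ∧ u ∈ M.worlds ∧ (∀ i, α i ∈ M.dom u) ∧
        (∀ i, β i = {y | E u (α i) y})) ∧
    Tp M v a = Tp Q v (fun i => {y | E v (a i) y}) := by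
  have hasim : IsAsim M Q (quotRel M E) (fun k s β u α => quotRel M E k u α s β) :=
    ⟨hQ.asimDir, hQ.asimDir_symm hE⟩
  have hB : quotRel M E n v a v (fun i => {y | E v (a i) y}) := ⟨rfl, hv, ha, fun _ => rfl⟩
  exact ⟨⟨hasim, hB⟩, ⟨hasim.symm, hB⟩,
    hasim.tp_eq hB hB ha fun i => hQ.class_mem_dom hv (ha i)⟩
end
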